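/- arXiv:1202.0937 — 4 statements merged into one kernel-verified Lean document; each statement's English description precedes it below -/
import Mathlib

section
/- Union-bound core of the compressive binary search analysis: let n = 2^{s₀} with s₀ ≥ 1 an integer, let m ≥ 2·s₀ be an integer, let μ > 0, and for s = 1,…,s₀ set m_s = ⌊(m − s₀)·2^{−s}⌋ + 1. Then ∑_{s=1}^{s₀} gaussianReal (2^{(s−1)/2}·m_s·μ/√n) m_s ({y ∈ ℝ : y < 0}) ≤ (s₀/2)·exp(−μ²·m/(8n)). -/
/-!
On the half-line `x < 0` a nonnegative mean only lowers the Gaussian density: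
`(x - θ)² ≥ x² + θ²`, so the density of `N(θ, v)` there is at most `exp (-θ² / (2v))` times that
of `N(0, v)`, and by symmetry `P(N(θ, v) < 0) ≤ exp (-θ² / (2v)) / 2`. At stage `s` the exponent is
`θ² / (2 mₛ) = μ² 2ˢ mₛ / (4n)`, and `2ˢ mₛ > m - s₀ ≥ m / 2`, so every stage contributes at most
`exp (-μ² m / (8n)) / 2`.
-/

open MeasureTheory ProbabilityTheory

namespace ProbabilityTheory

open scoped NNReal

lemma gaussianReal_zero_Iio_zero {v : ℝ≥0} (hv : v ≠ 0) :
    gaussianReal 0 v (Set.Iio 0) = 2⁻¹ := by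
  have := nullSingletonClass_gaussianReal (μ := 0) hv
  have hsymm : gaussianReal 0 v (Set.Ioi 0) = gaussianReal 0 v (Set.Iio 0) := by
    conv_lhs => rw [← neg_zero, ← gaussianReal_map_neg]
    rw [Measure.map_apply measurable_neg measurableSet_Ioi]
    simp
  have hsum : gaussianReal 0 v (Set.Iio 0) + gaussianReal 0 v (Set.Ioi 0) = 1 := by
    rw [← measure_union Set.Iio_disjoint_Ioi_same measurableSet_Ioi, Set.Iio_union_Ioi,
      prob_compl_eq_one_sub (measurableSet_singleton 0), measure_singleton, tsub_zero]
  rw [hsymm, ← two_mul, mul_comm] at hsum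
  exact ENNReal.eq_inv_of_mul_eq_one_left hsum

lemma gaussianPDFReal_le_exp_mul_gaussianPDFReal_zero {θ x : ℝ} (v : ℝ≥0) (hθ : 0 ≤ θ)
    (hx : x ≤ 0) :
    gaussianPDFReal θ v x ≤ Real.exp (-θ ^ 2 / (2 * v)) * gaussianPDFReal 0 v x := by
  rw [gaussianPDFReal, gaussianPDFReal, mul_left_comm, ← Real.exp_add, ← add_div]
  gcongr
  nlinarith

lemma gaussianReal_Iio_zero_le {θ : ℝ} {v : ℝ≥0} (hθ : 0 ≤ θ) (hv : v ≠ 0) :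
    gaussianReal θ v (Set.Iio 0) ≤ ENNReal.ofReal (Real.exp (-θ ^ 2 / (2 * v)) / 2) := by
  calc gaussianReal θ v (Set.Iio 0)
      ≤ ∫⁻ x in Set.Iio 0, ENNReal.ofReal (Real.exp (-θ ^ 2 / (2 * v))) * gaussianPDF 0 v x := by
        rw [gaussianReal_apply _ hv]
        refine setLIntegral_mono (by fun_prop) fun x hx => ?_
        rw [gaussianPDF, gaussianPDF, ← ENNReal.ofReal_mul (Real.exp_nonneg _)]
        exact ENNReal.ofReal_le_ofReal
          (gaussianPDFReal_le_exp_mul_gaussianPDFReal_zero v hθ hx.le)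
    _ = ENNReal.ofReal (Real.exp (-θ ^ 2 / (2 * v)) / 2) := by
        rw [lintegral_const_mul _ (measurable_gaussianPDF 0 v), ← gaussianReal_apply _ hv,
          gaussianReal_zero_Iio_zero hv, ENNReal.ofReal_div_of_pos two_pos, ENNReal.ofReal_ofNat]
        rfl

end ProbabilityTheory

lemma sq_two_rpow_mul_div_sqrt_div (s : ℕ) {k n : ℝ} (μ : ℝ) (hk : k ≠ 0) (hn : 0 ≤ n) :
    ((2 : ℝ) ^ (((s : ℝ) - 1) / 2) * k * μ / Real.sqrt n) ^ 2 / (2 * k)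
      = μ ^ 2 * (2 ^ s * k) / (4 * n) := by
  have hpow : ((2 : ℝ) ^ (((s : ℝ) - 1) / 2)) ^ 2 = 2 ^ s / 2 := by
    rw [← Real.rpow_natCast _ 2, ← Real.rpow_mul zero_le_two, Nat.cast_two,
      div_mul_cancel₀ _ two_ne_zero, Real.rpow_sub_one two_ne_zero, Real.rpow_natCast]
  rw [div_pow, mul_pow, mul_pow, hpow, Real.sq_sqrt hn]
  field_simp
  ring

lemma le_two_mul_two_pow_mul_div_add_one {s₀ m : ℕ} (hm : 2 * s₀ ≤ m) (s : ℕ) :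
    m ≤ 2 * (2 ^ s * ((m - s₀) / 2 ^ s + 1)) := by
  have := Nat.lt_mul_div_succ (m - s₀) (Nat.two_pow_pos s)
  omega

lemma gaussianReal_two_rpow_mul_div_sqrt_Iio_zero_le {s k m : ℕ} {μ n : ℝ} (hμ : 0 ≤ μ)
    (hn : 0 ≤ n) (hk : k ≠ 0) (hmk : m ≤ 2 * (2 ^ s * k)) :
    gaussianReal ((2 : ℝ) ^ (((s : ℝ) - 1) / 2) * k * μ / Real.sqrt n) k (Set.Iio 0)
      ≤ ENNReal.ofReal (Real.exp (-(μ ^ 2 * m) / (8 * n)) / 2) := by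
  refine (gaussianReal_Iio_zero_le (by positivity) (by exact_mod_cast hk)).trans ?_
  have hmk' : (m : ℝ) / 2 ≤ 2 ^ s * k := by
    rw [div_le_iff₀ two_pos, mul_comm]; exact_mod_cast hmk
  gcongr ENNReal.ofReal (Real.exp ?_ / 2)
  rw [NNReal.coe_natCast, neg_div, neg_div, neg_le_neg_iff,
    sq_two_rpow_mul_div_sqrt_div s μ (by exact_mod_cast hk) hn]
  calc μ ^ 2 * m / (8 * n) = μ ^ 2 * (m / 2) / (4 * n) := by ring
    _ ≤ μ ^ 2 * (2 ^ s * k) / (4 * n) := by gcongr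

theorem compressive_binary_search_union_bound_general (s₀ m n : ℕ)
    (hm : 2 * s₀ ≤ m) (μ : ℝ) (hμ : 0 < μ)
    (ms : ℕ → ℕ) (hms : ∀ s, ms s = (m - s₀) / 2 ^ s + 1) :
    ∑ s ∈ Finset.Icc 1 s₀,
        gaussianReal ((2 : ℝ) ^ (((s : ℝ) - 1) / 2) * (ms s : ℝ) * μ / Real.sqrt n)
          (ms s : NNReal) {y : ℝ | y < 0} ≤
      ENNReal.ofReal (((s₀ : ℝ) / 2) * Real.exp (-(μ ^ 2 * (m : ℝ)) / (8 * n))) := by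
  calc _ ≤ ∑ _s ∈ Finset.Icc 1 s₀, ENNReal.ofReal (Real.exp (-(μ ^ 2 * (m : ℝ)) / (8 * n)) / 2) :=
        Finset.sum_le_sum fun s _ => by
          rw [hms s]
          exact gaussianReal_two_rpow_mul_div_sqrt_Iio_zero_le hμ.le n.cast_nonneg
            (Nat.succ_ne_zero _) (le_two_mul_two_pow_mul_div_add_one hm s)
    _ = _ := by
        rw [Finset.sum_const, Nat.card_Icc, add_tsub_cancel_right, nsmul_eq_mul,
          ← ENNReal.ofReal_natCast, ← ENNReal.ofReal_mul (Nat.cast_nonneg _)]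
        ring_nf

/-- **Union-bound core of the compressive binary search analysis.**
Let `n = 2 ^ s₀` with `s₀ ≥ 1`, let `m ≥ 2·s₀`, let `μ > 0`, and for `s = 1, …, s₀` set
`mₛ = ⌊(m - s₀) · 2⁻ˢ⌋ + 1`.  Then the sum over the stages of the probabilities that the
stage decision statistic (distributed as a Gaussian with mean `2^{(s-1)/2}·mₛ·μ/√n` and
variance `mₛ`) is negative is at most `(s₀ / 2) · exp (-μ² m / (8 n))`. -/
theorem compressive_binary_search_union_bound (s₀ m n : ℕ) (hs₀ : 1 ≤ s₀)
    (hn : n = 2 ^ s₀) (hm : 2 * s₀ ≤ m) (μ : ℝ) (hμ : 0 < μ)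
    (ms : ℕ → ℕ) (hms : ∀ s, ms s = (m - s₀) / 2 ^ s + 1) :
    ∑ s ∈ Finset.Icc 1 s₀,
        gaussianReal ((2 : ℝ) ^ (((s : ℝ) - 1) / 2) * (ms s : ℝ) * μ / Real.sqrt n)
          (ms s : NNReal) {y : ℝ | y < 0} ≤
      ENNReal.ofReal (((s₀ : ℝ) / 2) * Real.exp (-(μ ^ 2 * (m : ℝ)) / (8 * n))) :=
  compressive_binary_search_union_bound_general s₀ m n hm μ hμ ms hms
end

section
/- Theorem (compressive binary search): let n = 2^{s₀} with s₀ ≥ 1 an integer, let the measurement budget m satisfy m ≥ 2·s₀, let μ > 0, and let x ∈ ℝⁿ equal μ at a single index j* ∈ {1,…,n} and 0 elsewhere. Run the compressive binary search: on a probability space carrying independent standard Gaussian random variables z^{(s)}_i (s = 1,…,s₀, i = 1,…,m_s), define recursively l_1 = 1 and, for s = 1,…,s₀: the current dyadic interval is J^{(s)} = {l_s,…,l_s + 2^{s₀−s+1} − 1} with left half J_1^{(s)} = {l_s,…,l_s + 2^{s₀−s} − 1} and right half J_2^{(s)}; u^{(s)} ∈ ℝⁿ has entries 2^{−(s₀−s+1)/2}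 on J_1^{(s)}, −2^{−(s₀−s+1)/2} on J_2^{(s)}, and 0 elsewhere; w^{(s)} = m_s·⟨u^{(s)}, x⟩ + ∑_{i=1}^{m_s} z^{(s)}_i; and l_{s+1} = l_s if w^{(s)} > 0, while l_{s+1} = l_s + 2^{s₀−s} otherwise. Let ĵ = l_{s₀+1} be the output. Then the probability of error satisfies P(ĵ ≠ j*) ≤ (s₀/2)·exp(−μ²·m/(8n)). -/
/-!
The current dyadic interval `{l s, …, l s + 2^{s₀+1-s} - 1}` starts as `{1, …, n}` and ends as
`{l (s₀+1)}`, so on the error event some stage `s` loses `j*`, and a union bound over the `s₀`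
stages leaves one stage to control. The start `l s` is a function of the noise of the earlier
stages only, hence independent of the stage-`s` noise sum, which is `N(0, mₛ)`. Losing `j*`
forces this sum past `t = mₛ μ 2^{-(s₀-s+1)/2}` in the wrong direction, an event of probability at
most `½ exp (-t² / 2mₛ)`; and `t² / 2mₛ ≥ μ² m / 8n` because `2^s mₛ > m - s₀ ≥ m / 2`.
-/

open MeasureTheory ProbabilityTheory Real
open scoped NNReal ENNReal

namespace ProbabilityTheory

lemma map_sum_eq_gaussianReal_of_iIndepFun {ι Ω : Type*} [MeasurableSpace Ω] {P : Measure Ω}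
    [IsProbabilityMeasure P] {z : ι → Ω → ℝ} (hmeas : ∀ i, Measurable (z i))
    (hindep : iIndepFun z P) {m : ι → ℝ} {v : ι → ℝ≥0}
    (hlaw : ∀ i, P.map (z i) = gaussianReal (m i) (v i)) (T : Finset ι) :
    P.map (∑ i ∈ T, z i) = gaussianReal (∑ i ∈ T, m i) (∑ i ∈ T, v i) := by
  classical
  induction T using Finset.induction_on with
  | empty => simp [Pi.zero_def, Measure.map_const]
  | insert i T hi ih =>
    simp only [Finset.sum_insert hi]
    exact gaussianReal_add_gaussianReal_of_indepFun
      (hindep.indepFun_finsetSum_of_notMem hmeas hi).symm (hlaw i) ih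

lemma _root_.MeasureTheory.measure_Ici_zero_eq_half_of_map_neg {ν : Measure ℝ}
    [IsProbabilityMeasure ν] [NullSingletonClass ν] (hν : ν.map (fun x ↦ -x) = ν) :
    ν (Set.Ici 0) = 2⁻¹ := by
  have hsymm : ν (Set.Iic 0) = ν (Set.Ici 0) := by
    conv_lhs => rw [← hν]
    rw [Measure.map_apply measurable_neg measurableSet_Iic]
    congr 1
    ext x
    simp
  have hcover := measure_union_add_inter (μ := ν) (Set.Ici (0 : ℝ)) (measurableSet_Iic (a := 0))
  rw [Set.Ici_union_Iic, measure_univ, Set.Ici_inter_Iic, Set.Icc_self, measure_singleton,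
    add_zero, hsymm, ← two_mul] at hcover
  rw [← mul_one (2⁻¹ : ℝ≥0∞), hcover, ENNReal.inv_mul_cancel_left two_ne_zero ENNReal.ofNat_ne_top]

lemma gaussianReal_Ici_eq_half (μ : ℝ) {v : ℝ≥0} (hv : v ≠ 0) :
    gaussianReal μ v (Set.Ici μ) = 2⁻¹ := by
  have := nullSingletonClass_gaussianReal (μ := 0) hv
  rw [← measure_Ici_zero_eq_half_of_map_neg (ν := gaussianReal 0 v)
    (by simp [gaussianReal_map_neg]), ← zero_add μ, ← gaussianReal_map_const_add,
    Measure.map_apply (measurable_const_add μ) measurableSet_Ici]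
  congr 1
  ext x
  simp

lemma gaussianPDFReal_le_exp_mul_gaussianPDFReal (v : ℝ≥0) {t x : ℝ} (ht : 0 ≤ t) (hx : t ≤ x) :
    gaussianPDFReal 0 v x ≤ exp (-(t ^ 2 / (2 * v))) * gaussianPDFReal t v x := by
  simp only [gaussianPDFReal_def, sub_zero]
  rw [mul_left_comm, ← exp_add, ← neg_div, ← add_div]
  gcongr
  nlinarith [mul_nonneg ht (sub_nonneg.2 hx)]

lemma gaussianReal_Ici_le_half_exp (v : ℝ≥0) (hv : v ≠ 0) {t : ℝ} (ht : 0 ≤ t) :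
    gaussianReal 0 v (Set.Ici t) ≤ ENNReal.ofReal (exp (-(t ^ 2 / (2 * v))) / 2) := by
  set c := exp (-(t ^ 2 / (2 * v)))
  calc gaussianReal 0 v (Set.Ici t)
      = ∫⁻ x in Set.Ici t, gaussianPDF 0 v x := gaussianReal_apply 0 hv _
    _ ≤ ∫⁻ x in Set.Ici t, ENNReal.ofReal c * gaussianPDF t v x := by
        refine setLIntegral_mono (by fun_prop) fun x hx ↦ ?_
        rw [gaussianPDF, gaussianPDF, ← ENNReal.ofReal_mul (exp_nonneg _)]
        exact ENNReal.ofReal_le_ofReal (gaussianPDFReal_le_exp_mul_gaussianPDFReal v ht hx)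
    _ = ENNReal.ofReal c * 2⁻¹ := by
        rw [lintegral_const_mul _ (measurable_gaussianPDF _ _), ← gaussianReal_apply t hv,
          gaussianReal_Ici_eq_half t hv]
    _ = ENNReal.ofReal (c / 2) := by
        rw [div_eq_mul_inv, ENNReal.ofReal_mul (exp_nonneg _), ENNReal.ofReal_inv_of_pos two_pos,
          ENNReal.ofReal_ofNat]

lemma gaussianReal_Iic_neg_le_half_exp (v : ℝ≥0) (hv : v ≠ 0) {t : ℝ} (ht : 0 ≤ t) :
    gaussianReal 0 v (Set.Iic (-t)) ≤ ENNReal.ofReal (exp (-(t ^ 2 / (2 * v))) / 2) := by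
  conv_lhs => rw [← neg_zero, ← gaussianReal_map_neg,
    Measure.map_apply measurable_neg measurableSet_Iic]
  convert gaussianReal_Ici_le_half_exp v hv ht using 2
  ext x
  simp

lemma Indep.measure_inter_union_inter_le {Ω : Type*} {ℱ 𝒢 mΩ : MeasurableSpace Ω}
    {P : Measure Ω} [IsProbabilityMeasure P] (hindep : Indep ℱ 𝒢 P) (hℱ : ℱ ≤ mΩ)
    {A B T₁ T₂ : Set Ω} (hA : MeasurableSet[ℱ] A) (hB : MeasurableSet[ℱ] B) (hAB : Disjoint A B)
    (hT₁ : MeasurableSet[𝒢] T₁) (hT₂ : MeasurableSet[𝒢] T₂) {q : ℝ≥0∞}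
    (h₁ : P T₁ ≤ q) (h₂ : P T₂ ≤ q) :
    P (A ∩ T₁ ∪ B ∩ T₂) ≤ q :=
  calc P (A ∩ T₁ ∪ B ∩ T₂)
      ≤ P (A ∩ T₁) + P (B ∩ T₂) := measure_union_le _ _
    _ = P A * P T₁ + P B * P T₂ := by
        rw [(hindep.indepSet_of_measurableSet hA hT₁).measure_inter_eq_mul,
          (hindep.indepSet_of_measurableSet hB hT₂).measure_inter_eq_mul]
    _ ≤ P A * q + P B * q := by gcongr
    _ = P (A ∪ B) * q := by rw [measure_union hAB (hℱ _ hB), add_mul]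
    _ ≤ q := mul_le_of_le_one_left' prob_le_one

end ProbabilityTheory

lemma Set.sdiff_subset_biUnion_Ico_sdiff {α : Type*} (C : ℕ → Set α) {a b : ℕ} (hab : a ≤ b) :
    C a \ C b ⊆ ⋃ s ∈ Finset.Ico a b, C s \ C (s + 1) := by
  induction b, hab using Nat.le_induction with
  | base => simp
  | succ b hab ih =>
    rintro ω ⟨ha, hb⟩
    simp only [Set.mem_iUnion, Finset.mem_Ico, exists_prop]
    by_cases hω : ω ∈ C b
    · exact ⟨b, ⟨hab, b.lt_succ_self⟩, hω, hb⟩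
    · obtain ⟨s, hs, h⟩ := Set.mem_iUnion₂.1 (ih ⟨ha, hω⟩)
      exact ⟨s, ⟨(Finset.mem_Ico.1 hs).1, by grind⟩, h⟩

lemma measure_sdiff_le_of_measure_sdiff_succ_le {Ω : Type*} {mΩ : MeasurableSpace Ω}
    {P : Measure Ω} (C : ℕ → Set Ω) {a b : ℕ} (hab : a ≤ b) {q : ℝ≥0∞}
    (hq : ∀ s ∈ Finset.Ico a b, P (C s \ C (s + 1)) ≤ q) :
    P (C a \ C b) ≤ (b - a : ℕ) * q :=
  calc P (C a \ C b)
      ≤ ∑ s ∈ Finset.Ico a b, P (C s \ C (s + 1)) :=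
        (measure_mono (Set.sdiff_subset_biUnion_Ico_sdiff C hab)).trans
          (measure_biUnion_finset_le _ _)
    _ ≤ ∑ s ∈ Finset.Ico a b, q := Finset.sum_le_sum hq
    _ = (b - a : ℕ) * q := by rw [Finset.sum_const, Nat.card_Ico, nsmul_eq_mul]

section Noise

variable {Ω κ β : Type*} [MeasurableSpace β]

abbrev noiseBefore (z : ℕ × κ → Ω → β) (s : ℕ) : MeasurableSpace Ω :=
  ⨆ p ∈ {r : ℕ × κ | r.1 < s}, MeasurableSpace.comap (z p) inferInstance

abbrev noiseAt (z : ℕ × κ → Ω → β) (s : ℕ) : MeasurableSpace Ω :=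
  ⨆ p ∈ {r : ℕ × κ | r.1 = s}, MeasurableSpace.comap (z p) inferInstance

variable {z : ℕ × κ → Ω → β}

lemma noiseBefore_mono : Monotone (noiseBefore z) :=
  fun _ _ hst ↦ biSup_mono fun _ hp ↦ lt_of_lt_of_le hp hst

lemma noiseBefore_le {mΩ : MeasurableSpace Ω} (hz : ∀ p, Measurable (z p)) (s : ℕ) :
    noiseBefore z s ≤ mΩ :=
  iSup₂_le fun p _ ↦ (hz p).comap_le

lemma noiseAt_le {mΩ : MeasurableSpace Ω} (hz : ∀ p, Measurable (z p)) (s : ℕ) :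
    noiseAt z s ≤ mΩ :=
  iSup₂_le fun p _ ↦ (hz p).comap_le

lemma measurable_noiseBefore {p : ℕ × κ} {s : ℕ} (hp : p.1 < s) :
    Measurable[noiseBefore z s] (z p) :=
  measurable_iff_comap_le.2 (le_biSup (fun p ↦ MeasurableSpace.comap (z p) inferInstance) hp)

lemma measurable_noiseAt (s : ℕ) (i : κ) : Measurable[noiseAt z s] (z (s, i)) :=
  measurable_iff_comap_le.2
    (le_biSup (fun p ↦ MeasurableSpace.comap (z p) inferInstance) (show (s, i).1 = s from rfl))

lemma indep_noiseBefore_noiseAt {mΩ : MeasurableSpace Ω} {P : Measure Ω}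
    (hz : ∀ p, Measurable (z p)) (hindep : iIndepFun z P) (s : ℕ) :
    Indep (noiseBefore z s) (noiseAt z s) P :=
  indep_iSup_of_disjoint (fun p ↦ (hz p).comap_le) ((iIndepFun_iff_iIndep _ _ _).1 hindep)
    (Set.disjoint_left.2 fun _ h₁ h₂ ↦ (ne_of_lt h₁) h₂)

end Noise

lemma measurable_of_threshold_recursion {Ω : Type*} {ℱ : ℕ → MeasurableSpace Ω}
    (hℱ : Monotone ℱ) {l : ℕ → Ω → ℕ} {w : ℕ → Ω → ℝ} {c : ℕ → ℕ} {a b : ℕ}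
    (ha : Measurable[ℱ a] (l a))
    (hw : ∀ s ∈ Finset.Icc a b, Measurable[ℱ s] (l s) → Measurable[ℱ (s + 1)] (w s))
    (hrec : ∀ s ∈ Finset.Icc a b, ∀ ω, l (s + 1) ω = if 0 < w s ω then l s ω else l s ω + c s) :
    ∀ s ∈ Finset.Icc a (b + 1), Measurable[ℱ s] (l s) := by
  intro s hs
  obtain ⟨has, hsb⟩ := Finset.mem_Icc.1 hs
  induction s, has using Nat.le_induction with
  | base => exact ha
  | succ s has ih =>
    have hs : s ∈ Finset.Icc a b := Finset.mem_Icc.2 ⟨has, by omega⟩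
    have hl := ih (Finset.mem_Icc.2 ⟨has, by omega⟩) (by omega)
    have hl' : Measurable[ℱ (s + 1)] (l s) := hl.mono (hℱ s.le_succ) le_rfl
    rw [show l (s + 1) = _ from funext (hrec s hs)]
    exact Measurable.ite (measurableSet_lt measurable_const (hw s hs hl)) hl'
      ((measurable_from_top (f := fun L ↦ L + c s)).comp hl')

lemma measure_searchStep_error_le {Ω : Type*} {ℱ 𝒢 mΩ : MeasurableSpace Ω} {P : Measure Ω}
    [IsProbabilityMeasure P] (hindep : Indep ℱ 𝒢 P) (hℱ : ℱ ≤ mΩ) (h𝒢 : 𝒢 ≤ mΩ)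
    {L L' : Ω → ℕ} (hL : Measurable[ℱ] L) {S w : Ω → ℝ} (hS : Measurable[𝒢] S) {v : ℝ≥0}
    (hv : v ≠ 0) (hlaw : P.map S = gaussianReal 0 v) {j k : ℕ} {t : ℝ} (ht : 0 ≤ t)
    (hleft : ∀ ω, j ∈ Set.Ico (L ω) (L ω + 2 ^ k) → S ω + t ≤ w ω)
    (hright : ∀ ω, j ∈ Set.Ico (L ω + 2 ^ k) (L ω + 2 ^ (k + 1)) → w ω ≤ S ω - t)
    (hnext : ∀ ω, L' ω = if 0 < w ω then L ω else L ω + 2 ^ k) :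
    P {ω | j ∈ Set.Ico (L ω) (L ω + 2 ^ (k + 1)) ∧ j ∉ Set.Ico (L' ω) (L' ω + 2 ^ k)} ≤
      ENNReal.ofReal (exp (-(t ^ 2 / (2 * v))) / 2) := by
  set A := L ⁻¹' {L | j ∈ Set.Ico L (L + 2 ^ k)}
  set B := L ⁻¹' {L | j ∈ Set.Ico (L + 2 ^ k) (L + 2 ^ (k + 1))}
  have hsub : {ω | j ∈ Set.Ico (L ω) (L ω + 2 ^ (k + 1)) ∧ j ∉ Set.Ico (L' ω) (L' ω + 2 ^ k)} ⊆
      A ∩ S ⁻¹' Set.Iic (-t) ∪ B ∩ S ⁻¹' Set.Ici t := by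
    rintro ω ⟨hj, hj'⟩
    simp only [hnext, Set.mem_Ico, pow_succ] at hj hj'
    by_cases hw : 0 < w ω
    · have hB : ω ∈ B := by
        simp only [B, Set.mem_preimage, Set.mem_ofPred_eq, Set.mem_Ico, pow_succ]; grind
      exact Or.inr ⟨hB, by simp only [Set.mem_preimage, Set.mem_Ici]; linarith [hright ω hB]⟩
    · have hA : ω ∈ A := by
        simp only [A, Set.mem_preimage, Set.mem_ofPred_eq, Set.mem_Ico]; grind
      exact Or.inl ⟨hA, by simp only [Set.mem_preimage, Set.mem_Iic]; linarith [hleft ω hA]⟩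
  have hAB : Disjoint A B := Set.disjoint_left.2 fun ω hA hB ↦ by
    simp only [A, B, Set.mem_preimage, Set.mem_ofPred_eq, Set.mem_Ico] at hA hB; omega
  have hS' := hS.mono h𝒢 le_rfl
  refine (measure_mono hsub).trans (hindep.measure_inter_union_inter_le hℱ
    (hL .of_discrete) (hL .of_discrete) hAB (hS measurableSet_Iic) (hS measurableSet_Ici) ?_ ?_)
  · rw [← Measure.map_apply hS' measurableSet_Iic, hlaw]
    exact gaussianReal_Iic_neg_le_half_exp v hv ht
  · rw [← Measure.map_apply hS' measurableSet_Ici, hlaw]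
    exact gaussianReal_Ici_le_half_exp v hv ht

lemma budget_mul_two_pow_le {m s₀ s : ℕ} (hm : 2 * s₀ ≤ m) (hs : s ≤ s₀) :
    m * 2 ^ (s₀ - s + 1) ≤ 4 * 2 ^ s₀ * ((m - s₀) / 2 ^ s + 1) := by
  set k := (m - s₀) / 2 ^ s + 1
  have hk : m - s₀ ≤ 2 ^ s * k := (Nat.lt_mul_div_succ _ (Nat.two_pow_pos s)).le
  have hpow : 2 ^ s * 2 ^ (s₀ - s + 1) = 2 * 2 ^ s₀ := by
    rw [← pow_add, show s + (s₀ - s + 1) = s₀ + 1 by omega, pow_succ, mul_comm]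
  calc m * 2 ^ (s₀ - s + 1)
      ≤ 2 * (m - s₀) * 2 ^ (s₀ - s + 1) := by gcongr; omega
    _ ≤ 2 * (2 ^ s * k) * 2 ^ (s₀ - s + 1) := by gcongr
    _ = 2 * k * (2 ^ s * 2 ^ (s₀ - s + 1)) := by ring
    _ = 4 * 2 ^ s₀ * k := by rw [hpow]; ring

lemma two_rpow_neg_half_sq (k : ℕ) : ((2 : ℝ) ^ (-((k : ℝ) / 2))) ^ 2 = ((2 : ℝ) ^ k)⁻¹ := by
  rw [← Real.rpow_mul_natCast zero_le_two, show -((k : ℝ) / 2) * (2 : ℕ) = -k by push_cast; ring,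
    Real.rpow_neg zero_le_two, Real.rpow_natCast]

lemma budget_exponent_le {m s₀ s : ℕ} (hm : 2 * s₀ ≤ m) (hs : s ≤ s₀) (μ : ℝ) :
    μ ^ 2 * m / (8 * 2 ^ s₀) ≤
      ((((m - s₀) / 2 ^ s + 1 : ℕ) : ℝ) * μ * (2 : ℝ) ^ (-(((s₀ - s + 1 : ℕ) : ℝ) / 2))) ^ 2 /
        (2 * (((m - s₀) / 2 ^ s + 1 : ℕ) : ℝ)) := by
  set k : ℕ := (m - s₀) / 2 ^ s + 1
  have hbudget : (m : ℝ) * 2 ^ (s₀ - s + 1) ≤ 4 * 2 ^ s₀ * k := by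
    exact_mod_cast budget_mul_two_pow_le hm hs
  rw [mul_pow, two_rpow_neg_half_sq]
  calc μ ^ 2 * m / (8 * 2 ^ s₀)
      = μ ^ 2 * (m * 2 ^ (s₀ - s + 1)) / (8 * 2 ^ s₀ * 2 ^ (s₀ - s + 1)) := by
        field_simp
    _ ≤ μ ^ 2 * (4 * 2 ^ s₀ * k) / (8 * 2 ^ s₀ * 2 ^ (s₀ - s + 1)) := by gcongr
    _ = (k * μ) ^ 2 * ((2 : ℝ) ^ (s₀ - s + 1))⁻¹ / (2 * k) := by
        field_simp
        ring

/-- The sensing vector `u^{(s)}` for the dyadic interval starting at `L`. -/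
noncomputable def sensingVector (s₀ s L j : ℕ) : ℝ :=
  if L ≤ j ∧ j ≤ L + 2 ^ (s₀ - s) - 1 then (2 : ℝ) ^ (-(((s₀ : ℝ) - (s : ℝ) + 1) / 2))
  else if L + 2 ^ (s₀ - s) ≤ j ∧ j ≤ L + 2 ^ (s₀ - s + 1) - 1 then
    -((2 : ℝ) ^ (-(((s₀ : ℝ) - (s : ℝ) + 1) / 2)))
  else 0

lemma cast_sub_add_one_of_le {s₀ s : ℕ} (hs : s ≤ s₀) :
    (s₀ : ℝ) - (s : ℝ) + 1 = ((s₀ - s + 1 : ℕ) : ℝ) := by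
  push_cast [Nat.cast_sub hs]
  ring

lemma sensingVector_of_mem_left {s₀ s L j : ℕ} (hs : s ≤ s₀)
    (hj : j ∈ Set.Ico L (L + 2 ^ (s₀ - s))) :
    sensingVector s₀ s L j = (2 : ℝ) ^ (-(((s₀ - s + 1 : ℕ) : ℝ) / 2)) := by
  have := Nat.one_le_two_pow (n := s₀ - s)
  rw [Set.mem_Ico] at hj
  rw [sensingVector, if_pos (by omega), cast_sub_add_one_of_le hs]

lemma sensingVector_of_mem_right {s₀ s L j : ℕ} (hs : s ≤ s₀)
    (hj : j ∈ Set.Ico (L + 2 ^ (s₀ - s)) (L + 2 ^ (s₀ - s + 1))) :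
    sensingVector s₀ s L j = -(2 : ℝ) ^ (-(((s₀ - s + 1 : ℕ) : ℝ) / 2)) := by
  have := Nat.one_le_two_pow (n := s₀ - s)
  rw [Set.mem_Ico] at hj
  rw [sensingVector, if_neg (by omega), if_pos (by omega), cast_sub_add_one_of_le hs]

lemma measurable_searchStart_noiseBefore {Ω : Type*} {z : ℕ × ℕ → Ω → ℝ} {s₀ jstar : ℕ}
    {μ : ℝ} {ms : ℕ → ℕ} {l : ℕ → Ω → ℕ} {w : ℕ → Ω → ℝ} (hl1 : ∀ ω, l 1 ω = 1)
    (hw : ∀ s ω, w s ω = ms s * μ * sensingVector s₀ s (l s ω) jstar +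
      ∑ i ∈ Finset.Icc 1 (ms s), z (s, i) ω)
    (hrec : ∀ s ∈ Finset.Icc 1 s₀, ∀ ω,
      l (s + 1) ω = if 0 < w s ω then l s ω else l s ω + 2 ^ (s₀ - s)) :
    ∀ s ∈ Finset.Icc 1 (s₀ + 1), Measurable[noiseBefore z s] (l s) := by
  refine measurable_of_threshold_recursion noiseBefore_mono ?_ (fun s _ hls ↦ ?_) hrec
  · simp only [show l 1 = fun _ ↦ 1 from funext hl1, measurable_const]
  · rw [show w s = _ from funext (hw s)]
    exact ((measurable_from_top (f := fun L ↦ (ms s : ℝ) * μ * sensingVector s₀ s L jstar)).comp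
      (hls.mono (noiseBefore_mono s.le_succ) le_rfl)).add
      (Finset.measurable_sum _ fun i _ ↦ measurable_noiseBefore (p := (s, i)) s.lt_succ_self)

lemma measure_compressiveStage_error_le {Ω : Type*} {mΩ : MeasurableSpace Ω} {P : Measure Ω}
    [IsProbabilityMeasure P] {z : ℕ × ℕ → Ω → ℝ} (hz_meas : ∀ p, Measurable (z p))
    (hz_indep : iIndepFun z P) (hz_law : ∀ p, P.map (z p) = gaussianReal 0 1)
    {s₀ m s k jstar : ℕ} {μ : ℝ} (hμ : 0 ≤ μ) (hm : 2 * s₀ ≤ m) (hs : s ≤ s₀)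
    (hk : k = (m - s₀) / 2 ^ s + 1) {L L' : Ω → ℕ} {w : Ω → ℝ}
    (hL : Measurable[noiseBefore z s] L)
    (hw : ∀ ω, w ω = k * μ * sensingVector s₀ s (L ω) jstar + ∑ i ∈ Finset.Icc 1 k, z (s, i) ω)
    (hnext : ∀ ω, L' ω = if 0 < w ω then L ω else L ω + 2 ^ (s₀ - s)) :
    P {ω | jstar ∈ Set.Ico (L ω) (L ω + 2 ^ (s₀ - s + 1)) ∧
        jstar ∉ Set.Ico (L' ω) (L' ω + 2 ^ (s₀ - s))} ≤
      ENNReal.ofReal (exp (-(μ ^ 2 * m) / (8 * 2 ^ s₀)) / 2) := by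
  have hlaw : P.map (fun ω ↦ ∑ i ∈ Finset.Icc 1 k, z (s, i) ω) = gaussianReal 0 k := by
    simpa [Finset.sum_fn] using map_sum_eq_gaussianReal_of_iIndepFun (fun i ↦ hz_meas (s, i))
      (hz_indep.precomp (Prod.mk_right_injective s)) (fun i ↦ hz_law (s, i)) (Finset.Icc 1 k)
  refine (measure_searchStep_error_le (indep_noiseBefore_noiseAt hz_meas hz_indep s)
    (noiseBefore_le hz_meas s) (noiseAt_le hz_meas s) hL
    (Finset.measurable_sum _ fun i _ ↦ measurable_noiseAt s i) (by simp [hk]) hlaw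
    (t := k * μ * (2 : ℝ) ^ (-(((s₀ - s + 1 : ℕ) : ℝ) / 2))) (by positivity)
    (fun ω hj ↦ by rw [hw, sensingVector_of_mem_left hs hj]; linarith)
    (fun ω hj ↦ by rw [hw, sensingVector_of_mem_right hs hj]; linarith) hnext).trans
    (ENNReal.ofReal_le_ofReal ?_)
  gcongr
  rw [neg_div, neg_le_neg_iff, NNReal.coe_natCast, hk]
  exact budget_exponent_le hm hs μ

theorem compressive_binary_search_general (s₀ m n : ℕ) (hn : n = 2 ^ s₀)
    (hm : 2 * s₀ ≤ m)
    (ms : ℕ → ℕ) (hms : ∀ s, ms s = (m - s₀) / 2 ^ s + 1)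
    (μ : ℝ) (hμ : 0 < μ) (jstar : ℕ) (hjstar : jstar ∈ Finset.Icc 1 n)
    (x : ℕ → ℝ) (hx : ∀ j, x j = if j = jstar then μ else 0)
    {Ω : Type*} [MeasurableSpace Ω] (P : Measure Ω) [IsProbabilityMeasure P]
    (z : ℕ × ℕ → Ω → ℝ) (hz_meas : ∀ p, Measurable (z p))
    (hz_indep : iIndepFun z P)
    (hz_law : ∀ p, Measure.map (z p) P = gaussianReal 0 1)
    (l : ℕ → Ω → ℕ) (u : ℕ → Ω → ℕ → ℝ) (w : ℕ → Ω → ℝ)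
    (hl1 : ∀ ω, l 1 ω = 1)
    (hu : ∀ s ω j, u s ω j =
      if l s ω ≤ j ∧ j ≤ l s ω + 2 ^ (s₀ - s) - 1 then
        (2 : ℝ) ^ (-(((s₀ : ℝ) - (s : ℝ) + 1) / 2))
      else if l s ω + 2 ^ (s₀ - s) ≤ j ∧ j ≤ l s ω + 2 ^ (s₀ - s + 1) - 1 then
        -((2 : ℝ) ^ (-(((s₀ : ℝ) - (s : ℝ) + 1) / 2)))
      else 0)
    (hw : ∀ s ω, w s ω =
      (ms s : ℝ) * (∑ j ∈ Finset.Icc 1 n, u s ω j * x j) +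
        ∑ i ∈ Finset.Icc 1 (ms s), z (s, i) ω)
    (hlrec : ∀ s ∈ Finset.Icc 1 s₀, ∀ ω,
      l (s + 1) ω = if 0 < w s ω then l s ω else l s ω + 2 ^ (s₀ - s)) :
    P {ω | l (s₀ + 1) ω ≠ jstar} ≤
      ENNReal.ofReal (((s₀ : ℝ) / 2) * Real.exp (-(μ ^ 2 * (m : ℝ)) / (8 * n))) := by
  subst hn
  have hw' : ∀ s ω, w s ω = ms s * μ * sensingVector s₀ s (l s ω) jstar +
      ∑ i ∈ Finset.Icc 1 (ms s), z (s, i) ω := by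
    intro s ω
    simp only [hw, hx, mul_ite, mul_zero, Finset.sum_ite_eq', if_pos hjstar]
    rw [show u s ω jstar = sensingVector s₀ s (l s ω) jstar from hu s ω jstar]
    ring
  have hl := measurable_searchStart_noiseBefore hl1 hw' hlrec
  set C : ℕ → Set Ω := fun s ↦ {ω | jstar ∈ Set.Ico (l s ω) (l s ω + 2 ^ (s₀ + 1 - s))}
  have hstage : ∀ s ∈ Finset.Ico 1 (s₀ + 1), P (C s \ C (s + 1)) ≤
      ENNReal.ofReal (exp (-(μ ^ 2 * m) / (8 * 2 ^ s₀)) / 2) := by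
    intro s hs
    rw [Finset.Ico_add_one_right_eq_Icc] at hs
    have hss₀ := (Finset.mem_Icc.1 hs).2
    simp only [C, show s₀ + 1 - s = s₀ - s + 1 by omega, show s₀ + 1 - (s + 1) = s₀ - s by omega]
    exact measure_compressiveStage_error_le hz_meas hz_indep hz_law hμ.le hm hss₀ (hms s)
      (hl s (by grind)) (hw' s) (hlrec s hs)
  have hcover : {ω | l (s₀ + 1) ω ≠ jstar} ⊆ C 1 \ C (s₀ + 1) := fun ω hω ↦ by
    simp only [C, Set.mem_sdiff, Set.mem_ofPred_eq, Set.mem_Ico, hl1]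
    grind
  calc P {ω | l (s₀ + 1) ω ≠ jstar}
      ≤ (s₀ + 1 - 1 : ℕ) * ENNReal.ofReal (exp (-(μ ^ 2 * m) / (8 * 2 ^ s₀)) / 2) :=
        (measure_mono hcover).trans (measure_sdiff_le_of_measure_sdiff_succ_le C (by omega) hstage)
    _ = _ := by
      rw [Nat.add_sub_cancel, ← ENNReal.ofReal_natCast, ← ENNReal.ofReal_mul (by positivity)]
      congr 1
      push_cast
      ring

/-- **Compressive binary search theorem.**
Let `n = 2 ^ s₀` with `s₀ ≥ 1`, let the budget satisfy `m ≥ 2 s₀`, let `μ > 0` and let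
`x ∈ ℝⁿ` equal `μ` at the single index `j* ∈ {1, …, n}` and `0` elsewhere.  On a
probability space carrying independent standard Gaussians `z (s, i)`, run the compressive
binary search: `l 1 = 1`; at stage `s` the current dyadic interval starts at `l s`, the
sensing vector `u s` equals `2^{-(s₀-s+1)/2}` on the left half
`{l s, …, l s + 2^{s₀-s} - 1}`, `-2^{-(s₀-s+1)/2}` on the right half
`{l s + 2^{s₀-s}, …, l s + 2^{s₀-s+1} - 1}` and `0` elsewhere; the decision statistic is
`w s = mₛ ⟨u s, x⟩ + ∑_{i=1}^{mₛ} z (s, i)` where `mₛ = ⌊(m - s₀) 2⁻ˢ⌋ + 1`; and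
`l (s+1) = l s` if `w s > 0`, `l (s+1) = l s + 2^{s₀-s}` otherwise.  Then the output
`ĵ = l (s₀ + 1)` satisfies `P(ĵ ≠ j*) ≤ (s₀ / 2) · exp (-μ² m / (8 n))`. -/
theorem compressive_binary_search (s₀ m n : ℕ) (hs₀ : 1 ≤ s₀) (hn : n = 2 ^ s₀)
    (hm : 2 * s₀ ≤ m)
    (ms : ℕ → ℕ) (hms : ∀ s, ms s = (m - s₀) / 2 ^ s + 1)
    (μ : ℝ) (hμ : 0 < μ) (jstar : ℕ) (hjstar : jstar ∈ Finset.Icc 1 n)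
    (x : ℕ → ℝ) (hx : ∀ j, x j = if j = jstar then μ else 0)
    {Ω : Type*} [MeasurableSpace Ω] (P : Measure Ω) [IsProbabilityMeasure P]
    (z : ℕ × ℕ → Ω → ℝ) (hz_meas : ∀ p, Measurable (z p))
    (hz_indep : iIndepFun z P)
    (hz_law : ∀ p, Measure.map (z p) P = gaussianReal 0 1)
    (l : ℕ → Ω → ℕ) (u : ℕ → Ω → ℕ → ℝ) (w : ℕ → Ω → ℝ)
    (hl1 : ∀ ω, l 1 ω = 1)
    (hu : ∀ s ω j, u s ω j =
      if l s ω ≤ j ∧ j ≤ l s ω + 2 ^ (s₀ - s) - 1 then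
        (2 : ℝ) ^ (-(((s₀ : ℝ) - (s : ℝ) + 1) / 2))
      else if l s ω + 2 ^ (s₀ - s) ≤ j ∧ j ≤ l s ω + 2 ^ (s₀ - s + 1) - 1 then
        -((2 : ℝ) ^ (-(((s₀ : ℝ) - (s : ℝ) + 1) / 2)))
      else 0)
    (hw : ∀ s ω, w s ω =
      (ms s : ℝ) * (∑ j ∈ Finset.Icc 1 n, u s ω j * x j) +
        ∑ i ∈ Finset.Icc 1 (ms s), z (s, i) ω)
    (hlrec : ∀ s ∈ Finset.Icc 1 s₀, ∀ ω,
      l (s + 1) ω = if 0 < w s ω then l s ω else l s ω + 2 ^ (s₀ - s)) :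
    P {ω | l (s₀ + 1) ω ≠ jstar} ≤
      ENNReal.ofReal (((s₀ : ℝ) / 2) * Real.exp (-(μ ^ 2 * (m : ℝ)) / (8 * n))) :=
  compressive_binary_search_general s₀ m n hn hm ms hms μ hμ jstar hjstar x hx P z hz_meas hz_indep
    hz_law l u w hl1 hu hw hlrec
end

section
/- Corollary (reliable recovery at the √(log log) scale): in the setting of the compressive binary search theorem, if additionally n ≥ 4 and μ ≥ 4·√(log log₂ n)·√(n/m), then (s₀/2)·exp(−μ²·m/(8n)) ≤ 1/4; consequently the compressive binary search locates the nonzero entry with probability at least 3/4. -/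
/-! With `log₂ n = s₀`, squaring the hypothesis on `μ` shows that the exponent `μ² m / (8 n)` is at
least `2 log s₀`, so the error bound is at most `(s₀ / 2) · s₀⁻² = 1 / (2 s₀)`, and `s₀ ≥ 2`
because `n ≥ 4`. -/

open Real

lemma mul_exp_neg_le_inv {s t : ℝ} (hs : 0 < s) (ht : 2 * log s ≤ t) : s * exp (-t) ≤ s⁻¹ := by
  have hexp : exp (-t) ≤ (s ^ 2)⁻¹ := by
    calc exp (-t) ≤ exp (-(2 * log s)) := exp_le_exp.mpr (neg_le_neg ht)
      _ = (s ^ 2)⁻¹ := by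
        rw [exp_neg, ← Nat.cast_ofNat, ← log_pow, exp_log (by positivity)]
  calc s * exp (-t) ≤ s * (s ^ 2)⁻¹ := mul_le_mul_of_nonneg_left hexp hs.le
    _ = s⁻¹ := by field_simp

lemma half_mul_exp_neg_le_quarter {s t : ℝ} (hs : 2 ≤ s) (ht : 2 * log s ≤ t) :
    s / 2 * exp (-t) ≤ 1 / 4 := by
  have h := mul_exp_neg_le_inv (by linarith) ht
  have hinv : s⁻¹ ≤ 2⁻¹ := inv_anti₀ (by norm_num) hs
  calc s / 2 * exp (-t) = s * exp (-t) / 2 := by ring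
    _ ≤ 1 / 4 := by linarith

lemma sq_mul_le_of_mul_sqrt_mul_sqrt_le {a b μ c : ℝ} (hc : 0 ≤ c) (ha : 0 ≤ a) (hb : 0 ≤ b)
    (h : c * √a * √b ≤ μ) : c ^ 2 * a * b ≤ μ ^ 2 := by
  calc c ^ 2 * a * b = (c * √a * √b) ^ 2 := by rw [mul_pow, mul_pow, sq_sqrt ha, sq_sqrt hb]
    _ ≤ μ ^ 2 := pow_le_pow_left₀ (by positivity) h 2

lemma logb_two_natCast_two_pow (s : ℕ) : logb 2 ((2 ^ s : ℕ) : ℝ) = s := by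
  rw [Nat.cast_pow, Nat.cast_ofNat, logb_pow, logb_self_eq_one one_lt_two, mul_one]

theorem compressive_binary_search_quarter_general (s₀ m n : ℕ) (hn : n = 2 ^ s₀)
    (hm : 2 * s₀ ≤ m) (hn4 : 4 ≤ n) (μ : ℝ)
    (hμ' : 4 * Real.sqrt (Real.log (Real.logb 2 (n : ℝ))) * Real.sqrt ((n : ℝ) / m) ≤ μ) :
    ((s₀ : ℝ) / 2) * Real.exp (-(μ ^ 2 * (m : ℝ)) / (8 * n)) ≤ 1 / 4 := by
  have hs₀ : 2 ≤ s₀ := by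
    by_contra! h
    interval_cases s₀ <;> omega
  have hsR : (2 : ℝ) ≤ s₀ := by exact_mod_cast hs₀
  have hmR : (0 : ℝ) < m := by exact_mod_cast (show 0 < m by omega)
  have hnR : (0 : ℝ) < n := by exact_mod_cast (show 0 < n by omega)
  rw [hn, logb_two_natCast_two_pow, ← hn] at hμ'
  have hsq : 4 ^ 2 * log s₀ * (n / m) ≤ μ ^ 2 :=
    sq_mul_le_of_mul_sqrt_mul_sqrt_le (by norm_num) (log_nonneg (by linarith)) (by positivity) hμ'
  have hexponent : 2 * log s₀ ≤ μ ^ 2 * m / (8 * n) := by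
    rw [le_div_iff₀ (by positivity)]
    calc 2 * log s₀ * (8 * n) = 4 ^ 2 * log s₀ * (n / m) * m := by field_simp; ring
      _ ≤ μ ^ 2 * m := mul_le_mul_of_nonneg_right hsq hmR.le
  rw [neg_div]
  exact half_mul_exp_neg_le_quarter hsR hexponent

/-- **Reliable recovery at the `√(log log)` scale.**
In the setting of the compressive binary search theorem (`n = 2 ^ s₀`, `s₀ ≥ 1`,
`m ≥ 2 s₀`, `μ > 0`), if additionally `n ≥ 4` and
`μ ≥ 4 · √(log (log₂ n)) · √(n / m)`, then the error bound of the theorem satisfies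
`(s₀ / 2) · exp (-μ² m / (8 n)) ≤ 1 / 4`; consequently the compressive binary search
locates the nonzero entry with probability at least `3 / 4`. -/
theorem compressive_binary_search_quarter (s₀ m n : ℕ) (hs₀ : 1 ≤ s₀) (hn : n = 2 ^ s₀)
    (hm : 2 * s₀ ≤ m) (hn4 : 4 ≤ n) (μ : ℝ) (hμ : 0 < μ)
    (hμ' : 4 * Real.sqrt (Real.log (Real.logb 2 (n : ℝ))) * Real.sqrt ((n : ℝ) / m) ≤ μ) :
    ((s₀ : ℝ) / 2) * Real.exp (-(μ ^ 2 * (m : ℝ)) / (8 * n)) ≤ 1 / 4 :=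
  compressive_binary_search_quarter_general s₀ m n hn hm hn4 μ hμ'
end

section
/- KL bound for half-supported mixtures in the adaptive Gaussian measurement model: let n be even, let J_1 = {1,…,n/2} and J_2 = {n/2+1,…,n}, let μ > 0, and for r = 1, 2 let P_r = (2/n)·∑_{j ∈ J_r} P_{(j)} be the uniform mixture of the measures P_{(j)} over j ∈ J_r. Then KL(P_0, P_1) + KL(P_0, P_2) ≤ μ²·m/n. -/
open MeasureTheory ProbabilityTheory
open scoped RealInnerProductSpace ENNReal Classical

/-- Law of the adaptive Gaussian measurement model after `k` measurements:
conditionally on the past `(y 1, …, y (i-1))`, the measurement `y i` is Gaussian with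
mean `⟪a i (y 1, …, y (i-1)), x⟫` and variance `1`. -/
noncomputable def advMeasure {n : ℕ} (a : (i : ℕ) → (Fin i → ℝ) → EuclideanSpace ℝ (Fin n))
    (x : EuclideanSpace ℝ (Fin n)) : (k : ℕ) → Measure (Fin k → ℝ)
  | 0 => Measure.dirac (fun i => i.elim0)
  | k + 1 =>
      (advMeasure a x k).bind fun y =>
        (gaussianReal ⟪a k y, x⟫ 1).map (fun t => Fin.snoc y t)

/-- Kullback–Leibler divergence: `∫ log (dP/dQ) dP` when `P ≪ Q` (and the integral makes
sense), and `+∞` otherwise. -/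
noncomputable def klDiv {Ω : Type*} [MeasurableSpace Ω] (P Q : Measure Ω) : ℝ≥0∞ :=
  if P ≪ Q ∧ Integrable (fun ω => Real.log (P.rnDeriv Q ω).toReal) P then
    ENNReal.ofReal (∫ ω, Real.log (P.rnDeriv Q ω).toReal ∂P)
  else ⊤

/-!
Under `P_0` the measurements are i.i.d. standard Gaussians, and tilting the Gaussian step by step
shows that `P_x` has density `exp (∑ᵢ cᵢ yᵢ - ∑ᵢ cᵢ² / 2)` with respect to `P_0`, where
`cᵢ = ⟪aᵢ(y₁, …, yᵢ₋₁), x⟫`. Each increment `cᵢ yᵢ` has `P_0`-mean zero, because `yᵢ` is a centred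
Gaussian independent of the past, so `E₀ log (dP_x/dP_0) = -E₀ ∑ᵢ cᵢ² / 2`. For a mixture
`∑ⱼ wⱼ P_{xⱼ}` Jensen's inequality for `exp` gives
`KL(P_0, ∑ⱼ wⱼ P_{xⱼ}) ≤ ∑ⱼ wⱼ E₀ ∑ᵢ cᵢ(xⱼ)² / 2`. With `xⱼ = μ eⱼ` and `wⱼ = 2/n` the two halves add
up to `(1/n) E₀ ∑ᵢ ∑ⱼ ⟪aᵢ, μ eⱼ⟫² = (μ²/n) E₀ ∑ᵢ ‖aᵢ‖² ≤ μ² m / n`.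
-/

open Real Finset
open scoped NNReal

section LogSumExp

variable {ι : Type*} {s : Finset ι} {w x : ι → ℝ}

lemma exp_sum_mul_le_sum_mul_exp (hw : ∀ j ∈ s, 0 ≤ w j) (hw1 : ∑ j ∈ s, w j = 1) :
    exp (∑ j ∈ s, w j * x j) ≤ ∑ j ∈ s, w j * exp (x j) := by
  simpa only [smul_eq_mul] using
    convexOn_exp.map_sum_le hw hw1 (fun j _ => Set.mem_univ (x j))

lemma sum_mul_exp_pos (hw : ∀ j ∈ s, 0 ≤ w j) (hw1 : ∑ j ∈ s, w j = 1) :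
    0 < ∑ j ∈ s, w j * exp (x j) :=
  (exp_pos _).trans_le (exp_sum_mul_le_sum_mul_exp hw hw1)

lemma sum_mul_le_log_sum_mul_exp (hw : ∀ j ∈ s, 0 ≤ w j) (hw1 : ∑ j ∈ s, w j = 1) :
    ∑ j ∈ s, w j * x j ≤ log (∑ j ∈ s, w j * exp (x j)) :=
  (le_log_iff_exp_le (sum_mul_exp_pos hw hw1)).2 (exp_sum_mul_le_sum_mul_exp hw hw1)

lemma abs_log_sum_mul_exp_le (hw : ∀ j ∈ s, 0 ≤ w j) (hw1 : ∑ j ∈ s, w j = 1) :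
    |log (∑ j ∈ s, w j * exp (x j))| ≤ ∑ j ∈ s, |x j| := by
  have hxT : ∀ j ∈ s, |x j| ≤ ∑ i ∈ s, |x i| :=
    fun j hj => single_le_sum (f := fun i => |x i|) (fun i _ => abs_nonneg _) hj
  have hw_le : ∀ j ∈ s, w j ≤ 1 := fun j hj => hw1 ▸ single_le_sum hw hj
  rw [abs_le]
  constructor
  · calc -∑ j ∈ s, |x j| ≤ ∑ j ∈ s, w j * x j := by
          rw [← sum_neg_distrib]
          refine sum_le_sum fun j hj => ?_
          nlinarith [hw j hj, hw_le j hj, neg_abs_le (x j), abs_nonneg (x j)]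
      _ ≤ _ := sum_mul_le_log_sum_mul_exp hw hw1
  · rw [log_le_iff_le_exp (sum_mul_exp_pos hw hw1)]
    calc ∑ j ∈ s, w j * exp (x j) ≤ ∑ j ∈ s, w j * exp (∑ i ∈ s, |x i|) :=
          sum_le_sum fun j hj => mul_le_mul_of_nonneg_left
            (exp_le_exp.2 ((le_abs_self _).trans (hxT j hj))) (hw j hj)
      _ = exp (∑ i ∈ s, |x i|) := by rw [← sum_mul, hw1, one_mul]

end LogSumExp

section KullbackLeibler

variable {Ω : Type*} [MeasurableSpace Ω] {P : Measure Ω}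

lemma klDiv_withDensity_ofReal_eq [SigmaFinite P] {G : Ω → ℝ} (hGm : AEMeasurable G P)
    (hG : ∀ᵐ ω ∂P, 0 < G ω) (hlog : Integrable (fun ω => log (G ω)) P) :
    klDiv P (P.withDensity fun ω => ENNReal.ofReal (G ω)) =
      ENNReal.ofReal (-∫ ω, log (G ω) ∂P) := by
  have hgm : AEMeasurable (fun ω => ENNReal.ofReal (G ω)) P := hGm.ennreal_ofReal
  have hg0 : ∀ᵐ ω ∂P, ENNReal.ofReal (G ω) ≠ 0 := by
    filter_upwards [hG] with ω hω using (ENNReal.ofReal_pos.2 hω).ne'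
  have hrn : ∀ᵐ ω ∂P,
      log (P.rnDeriv (P.withDensity fun ω => ENNReal.ofReal (G ω)) ω).toReal = -log (G ω) := by
    filter_upwards [Measure.rnDeriv_withDensity_right P P hgm hg0
      (ae_of_all _ fun _ => ENNReal.ofReal_ne_top), P.rnDeriv_self, hG] with ω hω hself hpos
    rw [hω, hself, mul_one, ENNReal.toReal_inv, ENNReal.toReal_ofReal hpos.le, log_inv]
  rw [klDiv, if_pos ⟨withDensity_absolutelyContinuous' hgm hg0, hlog.neg.congr (hrn.mono
    fun _ h => h.symm)⟩, integral_congr_ae hrn, integral_neg]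

lemma klDiv_withDensity_sum_mul_exp_le [SigmaFinite P] {ι : Type*} {s : Finset ι}
    {w : ι → ℝ} (hw : ∀ j ∈ s, 0 ≤ w j) (hw1 : ∑ j ∈ s, w j = 1)
    {f : ι → Ω → ℝ} (hf : ∀ j ∈ s, Integrable (f j) P) :
    klDiv P (P.withDensity fun ω => ENNReal.ofReal (∑ j ∈ s, w j * exp (f j ω))) ≤
      ENNReal.ofReal (-∑ j ∈ s, w j * ∫ ω, f j ω ∂P) := by
  have hGm : AEMeasurable (fun ω => ∑ j ∈ s, w j * exp (f j ω)) P :=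
    aemeasurable_fun_sum s fun j hj =>
      ((hf j hj).aemeasurable.exp).const_mul _
  have hsum : Integrable (fun ω => ∑ j ∈ s, w j * f j ω) P :=
    integrable_finsetSum s fun j hj => (hf j hj).const_mul _
  have hlog : Integrable (fun ω => log (∑ j ∈ s, w j * exp (f j ω))) P :=
    (integrable_finsetSum s fun j hj => (hf j hj).abs).mono'
      (measurable_log.comp_aemeasurable hGm).aestronglyMeasurable
      (ae_of_all _ fun ω => (abs_log_sum_mul_exp_le hw hw1).trans_eq (by simp))
  rw [klDiv_withDensity_ofReal_eq hGm (ae_of_all _ fun _ => sum_mul_exp_pos hw hw1) hlog]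
  refine ENNReal.ofReal_le_ofReal (neg_le_neg ?_)
  calc ∑ j ∈ s, w j * ∫ ω, f j ω ∂P = ∫ ω, ∑ j ∈ s, w j * f j ω ∂P := by
        rw [integral_finsetSum s fun j hj => (hf j hj).const_mul _]
        simp only [integral_const_mul]
    _ ≤ ∫ ω, log (∑ j ∈ s, w j * exp (f j ω)) ∂P :=
        integral_mono hsum hlog fun ω => sum_mul_le_log_sum_mul_exp hw hw1

end KullbackLeibler

lemma abs_inner_le_norm_of_norm_le_one {E : Type*} [NormedAddCommGroup E] [InnerProductSpace ℝ E]
    (x : E) {v : E} (hv : ‖v‖ ≤ 1) : |⟪v, x⟫| ≤ ‖x‖ :=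
  (abs_real_inner_le_norm v x).trans (mul_le_of_le_one_left (norm_nonneg x) hv)

lemma gaussianReal_eq_withDensity_exp (c : ℝ) {v : ℝ≥0} (hv : v ≠ 0) :
    gaussianReal c v =
      (gaussianReal 0 v).withDensity fun t => ENNReal.ofReal (exp ((c * t - c ^ 2 / 2) / v)) := by
  rw [gaussianReal_of_var_ne_zero c hv, gaussianReal_of_var_ne_zero 0 hv,
    ← withDensity_mul _ (measurable_gaussianPDF 0 v) (by fun_prop)]
  congr 1
  funext t
  rw [Pi.mul_apply, gaussianPDF, gaussianPDF, ← ENNReal.ofReal_mul (gaussianPDFReal_nonneg _ _ _),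
    gaussianPDFReal, gaussianPDFReal, mul_assoc _ (exp _), ← exp_add]
  congr 3
  field_simp
  ring

noncomputable section Model

variable {n : ℕ} (a : (i : ℕ) → (Fin i → ℝ) → EuclideanSpace ℝ (Fin n))
  (x : EuclideanSpace ℝ (Fin n)) {k : ℕ}

def meanCoef (y : Fin k → ℝ) (i : Fin k) : ℝ :=
  ⟪a i (Fin.take i i.isLt.le y), x⟫

def scoreSum (y : Fin k → ℝ) : ℝ :=
  ∑ i, meanCoef a x y i * y i

def energy (y : Fin k → ℝ) : ℝ :=
  ∑ i, meanCoef a x y i ^ 2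

def logLR (y : Fin k → ℝ) : ℝ :=
  scoreSum a x y - energy a x y / 2

lemma meanCoef_snoc_castSucc (y : Fin k → ℝ) (t : ℝ) (i : Fin k) :
    meanCoef a x (Fin.snoc y t : Fin (k + 1) → ℝ) i.castSucc = meanCoef a x y i := by
  rw [meanCoef, meanCoef, ← Fin.take_init, Fin.init_snoc]
  rfl

lemma meanCoef_snoc_last (y : Fin k → ℝ) (t : ℝ) :
    meanCoef a x (Fin.snoc y t : Fin (k + 1) → ℝ) (Fin.last k) = ⟪a k y, x⟫ := by
  rw [meanCoef, ← Fin.take_init _ (Fin.is_le _), Fin.init_snoc]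
  exact congrArg (fun z => ⟪a k z, x⟫) (Fin.take_eq_self y)

lemma scoreSum_snoc (y : Fin k → ℝ) (t : ℝ) :
    scoreSum a x (Fin.snoc y t : Fin (k + 1) → ℝ) = scoreSum a x y + ⟪a k y, x⟫ * t := by
  simp only [scoreSum, Fin.sum_univ_castSucc, meanCoef_snoc_castSucc, meanCoef_snoc_last,
    Fin.snoc_castSucc, Fin.snoc_last]

lemma energy_snoc (y : Fin k → ℝ) (t : ℝ) :
    energy a x (Fin.snoc y t : Fin (k + 1) → ℝ) = energy a x y + ⟪a k y, x⟫ ^ 2 := by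
  simp only [energy, Fin.sum_univ_castSucc, meanCoef_snoc_castSucc, meanCoef_snoc_last]

lemma logLR_snoc (y : Fin k → ℝ) (t : ℝ) :
    logLR a x (Fin.snoc y t : Fin (k + 1) → ℝ) =
      logLR a x y + (⟪a k y, x⟫ * t - ⟪a k y, x⟫ ^ 2 / 2) := by
  rw [logLR, logLR, scoreSum_snoc, energy_snoc]
  ring

lemma energy_nonneg (y : Fin k → ℝ) : 0 ≤ energy a x y :=
  sum_nonneg fun _ _ => sq_nonneg _

variable {a}

lemma energy_le (hb : ∀ i < k, ∀ z, ‖a i z‖ ≤ 1) (y : Fin k → ℝ) :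
    energy a x y ≤ k * ‖x‖ ^ 2 := by
  calc energy a x y ≤ ∑ _i : Fin k, ‖x‖ ^ 2 := sum_le_sum fun i _ =>
        sq_le_sq' (abs_le.1 (abs_inner_le_norm_of_norm_le_one x (hb i i.isLt _))).1
          (abs_le.1 (abs_inner_le_norm_of_norm_le_one x (hb i i.isLt _))).2
    _ = k * ‖x‖ ^ 2 := by simp

lemma measurable_meanCoef (hm : ∀ i < k, Measurable (a i)) (i : Fin k) :
    Measurable fun y : Fin k → ℝ => meanCoef a x y i :=
  (hm i i.isLt).inner_const.comp (measurable_pi_lambda _ fun _ => measurable_pi_apply _)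

lemma measurable_scoreSum (hm : ∀ i < k, Measurable (a i)) :
    Measurable fun y : Fin k → ℝ => scoreSum a x y :=
  measurable_fun_sum _ fun i _ => (measurable_meanCoef x hm i).mul (measurable_pi_apply i)

lemma measurable_energy (hm : ∀ i < k, Measurable (a i)) :
    Measurable fun y : Fin k → ℝ => energy a x y :=
  measurable_fun_sum _ fun i _ => (measurable_meanCoef x hm i).pow_const 2

lemma measurable_logLR (hm : ∀ i < k, Measurable (a i)) :
    Measurable fun y : Fin k → ℝ => logLR a x y :=
  (measurable_scoreSum x hm).sub ((measurable_energy x hm).div_const 2)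

end Model

section Measures

variable {n : ℕ} (a : (i : ℕ) → (Fin i → ℝ) → EuclideanSpace ℝ (Fin n))
  (x : EuclideanSpace ℝ (Fin n)) {k : ℕ}

lemma measurable_finSnoc :
    Measurable fun p : (Fin k → ℝ) × ℝ => (Fin.snoc p.1 p.2 : Fin (k + 1) → ℝ) :=
  (continuous_fst.finSnoc continuous_snd).measurable

lemma measurable_gaussianReal_preimage_snoc {c : (Fin k → ℝ) → ℝ} (hc : Measurable c)
    {s : Set (Fin (k + 1) → ℝ)} (hs : MeasurableSet s) :
    Measurable fun y => gaussianReal (c y) 1 (Fin.snoc (α := fun _ => ℝ) y ⁻¹' s) := by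
  let κ : Kernel (Fin k → ℝ) ℝ :=
    ⟨fun y => gaussianReal (c y) 1, measurable_gaussianReal.comp (hc.prodMk measurable_const)⟩
  have : IsMarkovKernel κ :=
    ⟨fun y => inferInstanceAs (IsProbabilityMeasure (gaussianReal (c y) 1))⟩
  exact Kernel.measurable_kernel_prodMk_left (κ := κ) (measurable_finSnoc hs)

lemma advMeasure_succ_apply (hc : Measurable fun y : Fin k → ℝ => ⟪a k y, x⟫)
    {s : Set (Fin (k + 1) → ℝ)} (hs : MeasurableSet s) :
    advMeasure a x (k + 1) s =
      ∫⁻ y, gaussianReal ⟪a k y, x⟫ 1 (Fin.snoc (α := fun _ => ℝ) y ⁻¹' s)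
        ∂advMeasure a x k := by
  have hmap_apply : ∀ y {s : Set (Fin (k + 1) → ℝ)}, MeasurableSet s →
      (gaussianReal ⟪a k y, x⟫ 1).map (Fin.snoc (α := fun _ => ℝ) y) s =
        gaussianReal ⟪a k y, x⟫ 1 (Fin.snoc (α := fun _ => ℝ) y ⁻¹' s) :=
    fun y _ hs => Measure.map_apply (measurable_finSnoc.comp measurable_prodMk_left) hs
  have hmap : Measurable fun y : Fin k → ℝ =>
      (gaussianReal ⟪a k y, x⟫ 1).map (Fin.snoc (α := fun _ => ℝ) y) :=
    Measure.measurable_of_measurable_coe _ fun s hs => by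
      simpa only [hmap_apply _ hs] using measurable_gaussianReal_preimage_snoc hc hs
  rw [advMeasure, Measure.bind_apply hs hmap.aemeasurable]
  exact lintegral_congr fun y => hmap_apply y hs

lemma advMeasure_zero_succ :
    advMeasure a 0 (k + 1) = ((advMeasure a 0 k).prod (gaussianReal 0 1)).map
      fun p => (Fin.snoc p.1 p.2 : Fin (k + 1) → ℝ) := by
  ext s hs
  rw [advMeasure_succ_apply a 0 (by simp) hs,
    Measure.map_apply measurable_finSnoc hs, Measure.prod_apply (measurable_finSnoc hs)]
  simp only [inner_zero_right]
  rfl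

instance isProbabilityMeasure_advMeasure_zero :
    ∀ k, IsProbabilityMeasure (advMeasure a 0 k)
  | 0 => Measure.dirac.isProbabilityMeasure
  | k + 1 => by
    have := isProbabilityMeasure_advMeasure_zero k
    rw [advMeasure_zero_succ]
    exact Measure.isProbabilityMeasure_map measurable_finSnoc.aemeasurable

lemma integrable_advMeasure_zero_succ_iff {f : (Fin (k + 1) → ℝ) → ℝ}
    (hf : AEStronglyMeasurable f (advMeasure a 0 (k + 1))) :
    Integrable f (advMeasure a 0 (k + 1)) ↔
      Integrable (fun p => f (Fin.snoc p.1 p.2))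
        ((advMeasure a 0 k).prod (gaussianReal 0 1)) := by
  rw [advMeasure_zero_succ] at hf ⊢
  exact integrable_map_measure hf measurable_finSnoc.aemeasurable

lemma integral_advMeasure_zero_succ {f : (Fin (k + 1) → ℝ) → ℝ}
    (hf : AEStronglyMeasurable f (advMeasure a 0 (k + 1))) :
    ∫ z, f z ∂advMeasure a 0 (k + 1) =
      ∫ p, f (Fin.snoc p.1 p.2) ∂(advMeasure a 0 k).prod (gaussianReal 0 1) := by
  rw [advMeasure_zero_succ] at hf ⊢
  exact integral_map measurable_finSnoc.aemeasurable hf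

end Measures

section LikelihoodRatio

variable {n : ℕ} {a : (i : ℕ) → (Fin i → ℝ) → EuclideanSpace ℝ (Fin n)}
  (x : EuclideanSpace ℝ (Fin n)) {k : ℕ}

lemma integrable_inner_of_norm_le_one {ν : Measure (Fin k → ℝ)} [IsFiniteMeasure ν]
    (hm : Measurable (a k)) (hb : ∀ z, ‖a k z‖ ≤ 1) :
    Integrable (fun y => ⟪a k y, x⟫) ν :=
  .of_bound hm.inner_const.aestronglyMeasurable ‖x‖
    (ae_of_all _ fun y => (abs_inner_le_norm_of_norm_le_one x (hb y)))

lemma integrable_scoreSum (hm : ∀ i < k, Measurable (a i))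
    (hb : ∀ i < k, ∀ z, ‖a i z‖ ≤ 1) :
    Integrable (fun y => scoreSum a x y) (advMeasure a 0 k) := by
  induction k with
  | zero => simp [scoreSum]
  | succ k ih =>
    have hm' : ∀ i < k, Measurable (a i) := fun i hi => hm i (Nat.lt_succ_of_lt hi)
    have hb' : ∀ i < k, ∀ z, ‖a i z‖ ≤ 1 := fun i hi => hb i (Nat.lt_succ_of_lt hi)
    rw [integrable_advMeasure_zero_succ_iff a (measurable_scoreSum x hm).aestronglyMeasurable]
    simp only [scoreSum_snoc]
    exact ((ih hm' hb').comp_fst _).add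
      ((integrable_inner_of_norm_le_one x (hm k k.lt_succ_self) (hb k k.lt_succ_self)).mul_prod
        IsGaussian.integrable_id)

lemma integral_scoreSum (hm : ∀ i < k, Measurable (a i))
    (hb : ∀ i < k, ∀ z, ‖a i z‖ ≤ 1) :
    ∫ y, scoreSum a x y ∂advMeasure a 0 k = 0 := by
  induction k with
  | zero => simp [scoreSum]
  | succ k ih =>
    have hm' : ∀ i < k, Measurable (a i) := fun i hi => hm i (Nat.lt_succ_of_lt hi)
    have hb' : ∀ i < k, ∀ z, ‖a i z‖ ≤ 1 := fun i hi => hb i (Nat.lt_succ_of_lt hi)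
    rw [integral_advMeasure_zero_succ a (measurable_scoreSum x hm).aestronglyMeasurable]
    simp only [scoreSum_snoc]
    rw [integral_add ((integrable_scoreSum x hm' hb').comp_fst _)
        ((integrable_inner_of_norm_le_one x (hm k k.lt_succ_self) (hb k k.lt_succ_self)).mul_prod
          (g := fun t : ℝ => t) IsGaussian.integrable_id),
      integral_fun_fst, ih hm' hb',
      integral_prod_mul (fun y => ⟪a k y, x⟫) (fun t : ℝ => t), integral_id_gaussianReal]
    simp

lemma integrable_energy {ν : Measure (Fin k → ℝ)} [IsFiniteMeasure ν]
    (hm : ∀ i < k, Measurable (a i)) (hb : ∀ i < k, ∀ z, ‖a i z‖ ≤ 1) :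
    Integrable (fun y => energy a x y) ν :=
  .of_bound (measurable_energy x hm).aestronglyMeasurable (k * ‖x‖ ^ 2) (ae_of_all _ fun y => by
    rw [Real.norm_of_nonneg (energy_nonneg a x y)]
    exact energy_le x hb y)

lemma integrable_logLR (hm : ∀ i < k, Measurable (a i))
    (hb : ∀ i < k, ∀ z, ‖a i z‖ ≤ 1) :
    Integrable (fun y => logLR a x y) (advMeasure a 0 k) :=
  (integrable_scoreSum x hm hb).sub ((integrable_energy x hm hb).div_const 2)

lemma integral_logLR (hm : ∀ i < k, Measurable (a i))
    (hb : ∀ i < k, ∀ z, ‖a i z‖ ≤ 1) :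
    ∫ y, logLR a x y ∂advMeasure a 0 k = -(∫ y, energy a x y ∂advMeasure a 0 k) / 2 := by
  simp only [logLR]
  rw [integral_sub (integrable_scoreSum x hm hb) ((integrable_energy x hm hb).div_const 2),
    integral_scoreSum x hm hb, integral_div, zero_sub, neg_div]

lemma advMeasure_eq_withDensity (hm : ∀ i < k, Measurable (a i)) :
    advMeasure a x k =
      (advMeasure a 0 k).withDensity fun y => ENNReal.ofReal (exp (logLR a x y)) := by
  induction k with
  | zero =>
    simp only [logLR, scoreSum, energy, univ_eq_empty, sum_empty, sub_zero,
      zero_div, exp_zero, ENNReal.ofReal_one]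
    exact (withDensity_one).symm
  | succ k ih =>
    have hc : Measurable fun y : Fin k → ℝ => ⟪a k y, x⟫ :=
      (hm k k.lt_succ_self).inner_const
    have hρ : Measurable fun z : Fin (k + 1) → ℝ => ENNReal.ofReal (exp (logLR a x z)) :=
      (measurable_logLR x hm).exp.ennreal_ofReal
    ext s hs
    calc advMeasure a x (k + 1) s
        = ∫⁻ y, gaussianReal ⟪a k y, x⟫ 1 (Fin.snoc (α := fun _ => ℝ) y ⁻¹' s)
            ∂advMeasure a x k := advMeasure_succ_apply a x hc hs
      _ = ∫⁻ y, ENNReal.ofReal (exp (logLR a x y)) *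
            gaussianReal ⟪a k y, x⟫ 1 (Fin.snoc (α := fun _ => ℝ) y ⁻¹' s)
            ∂advMeasure a 0 k := by
          rw [ih fun i hi => hm i (Nat.lt_succ_of_lt hi), lintegral_withDensity_eq_lintegral_mul _
            (measurable_logLR x _).exp.ennreal_ofReal (measurable_gaussianReal_preimage_snoc hc hs)]
          · rfl
          · exact fun i hi => hm i (Nat.lt_succ_of_lt hi)
      _ = ∫⁻ y, ∫⁻ t, s.indicator (fun z => ENNReal.ofReal (exp (logLR a x z)))
            (Fin.snoc y t) ∂gaussianReal 0 1 ∂advMeasure a 0 k := by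
          refine lintegral_congr fun y => ?_
          have hpre : MeasurableSet (Fin.snoc (α := fun _ => ℝ) y ⁻¹' s) :=
            measurable_finSnoc.comp measurable_prodMk_left hs
          rw [gaussianReal_eq_withDensity_exp _ one_ne_zero, withDensity_apply _ hpre,
            ← lintegral_const_mul' _ _ ENNReal.ofReal_ne_top, ← lintegral_indicator hpre]
          refine lintegral_congr fun t => ?_
          by_cases ht : (Fin.snoc y t : Fin (k + 1) → ℝ) ∈ s
          · simp [ht, logLR_snoc, exp_add, ENNReal.ofReal_mul (exp_nonneg _)]
          · simp [ht]
      _ = ∫⁻ z, s.indicator (fun z => ENNReal.ofReal (exp (logLR a x z))) z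
            ∂advMeasure a 0 (k + 1) := by
          rw [advMeasure_zero_succ, lintegral_map (hρ.indicator hs) measurable_finSnoc]
          exact (lintegral_prod _ ((hρ.indicator hs).comp measurable_finSnoc).aemeasurable).symm
      _ = _ := by rw [withDensity_apply _ hs, lintegral_indicator hs]

end LikelihoodRatio

lemma sum_inner_single_sq {ι : Type*} [Fintype ι] [DecidableEq ι]
    (v : EuclideanSpace ℝ ι) (μ : ℝ) :
    ∑ j, ⟪v, EuclideanSpace.single j μ⟫ ^ 2 = μ ^ 2 * ‖v‖ ^ 2 := by
  simp [EuclideanSpace.inner_single_right, EuclideanSpace.norm_sq_eq, mul_pow, mul_sum]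

section Mixture

variable {n : ℕ} {a : (i : ℕ) → (Fin i → ℝ) → EuclideanSpace ℝ (Fin n)} {k : ℕ}
  {ι : Type*} {s : Finset ι} {w : ι → ℝ} (xs : ι → EuclideanSpace ℝ (Fin n))

lemma sum_smul_advMeasure_eq_withDensity (hw : ∀ j ∈ s, 0 ≤ w j)
    (hm : ∀ i < k, Measurable (a i)) :
    ∑ j ∈ s, ENNReal.ofReal (w j) • advMeasure a (xs j) k =
      (advMeasure a 0 k).withDensity
        fun y => ENNReal.ofReal (∑ j ∈ s, w j * exp (logLR a (xs j) y)) := by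
  have hdens : ∀ j, advMeasure a (xs j) k =
      (advMeasure a 0 k).withDensity fun y => ENNReal.ofReal (exp (logLR a (xs j) y)) :=
    fun j => advMeasure_eq_withDensity (xs j) hm
  ext S hS
  simp_rw [Measure.finsetSum_apply, Measure.smul_apply, hdens, withDensity_apply _ hS, smul_eq_mul,
    ← lintegral_const_mul _ (measurable_logLR _ hm).exp.ennreal_ofReal]
  rw [← lintegral_finsetSum _ fun j _ =>
    ((measurable_logLR _ hm).exp.ennreal_ofReal.const_mul _)]
  refine lintegral_congr fun y => ?_
  rw [ENNReal.ofReal_sum_of_nonneg fun j hj => mul_nonneg (hw j hj) (exp_nonneg _)]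
  exact sum_congr rfl fun j hj => (ENNReal.ofReal_mul (hw j hj)).symm

lemma klDiv_sum_smul_advMeasure_le (hw : ∀ j ∈ s, 0 ≤ w j) (hw1 : ∑ j ∈ s, w j = 1)
    (hm : ∀ i < k, Measurable (a i)) (hb : ∀ i < k, ∀ z, ‖a i z‖ ≤ 1) :
    klDiv (advMeasure a 0 k) (∑ j ∈ s, ENNReal.ofReal (w j) • advMeasure a (xs j) k) ≤
      ENNReal.ofReal (∑ j ∈ s, w j * (∫ y, energy a (xs j) y ∂advMeasure a 0 k) / 2) := by
  rw [sum_smul_advMeasure_eq_withDensity xs hw hm]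
  refine (klDiv_withDensity_sum_mul_exp_le hw hw1
    fun j _ => integrable_logLR (xs j) hm hb).trans_eq ?_
  simp only [integral_logLR _ hm hb, ← sum_neg_distrib]
  congr 2 with j
  ring

lemma klDiv_smul_sum_advMeasure_le {c : ℝ} (hc : 0 ≤ c) (hs : #s * c = 1)
    (hm : ∀ i < k, Measurable (a i)) (hb : ∀ i < k, ∀ z, ‖a i z‖ ≤ 1) :
    klDiv (advMeasure a 0 k) (ENNReal.ofReal c • ∑ j ∈ s, advMeasure a (xs j) k) ≤
      ENNReal.ofReal (c * (∑ j ∈ s, ∫ y, energy a (xs j) y ∂advMeasure a 0 k) / 2) := by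
  rw [smul_sum]
  refine (klDiv_sum_smul_advMeasure_le xs (fun _ _ => hc)
    (by rw [sum_const, nsmul_eq_mul, hs]) hm hb).trans_eq ?_
  rw [mul_sum, sum_div]

lemma sum_energy_single_le (hb : ∀ i < k, ∀ z, ‖a i z‖ ≤ 1) (μ : ℝ)
    (y : Fin k → ℝ) :
    ∑ j, energy a (EuclideanSpace.single j μ) y ≤ k * μ ^ 2 := by
  simp only [energy, meanCoef]
  rw [sum_comm]
  calc ∑ i : Fin k, ∑ j, ⟪a i (Fin.take i i.isLt.le y), EuclideanSpace.single j μ⟫ ^ 2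
      = ∑ i : Fin k, μ ^ 2 * ‖a i (Fin.take i i.isLt.le y)‖ ^ 2 := by
        simp only [sum_inner_single_sq]
    _ ≤ ∑ _i : Fin k, μ ^ 2 := sum_le_sum fun i _ =>
        mul_le_of_le_one_right (sq_nonneg _) (pow_le_one₀ (norm_nonneg _) (hb i i.isLt _))
    _ = k * μ ^ 2 := by simp

lemma integral_sum_energy_single_le (hm : ∀ i < k, Measurable (a i))
    (hb : ∀ i < k, ∀ z, ‖a i z‖ ≤ 1) (μ : ℝ) :
    ∑ j, ∫ y, energy a (EuclideanSpace.single j μ) y ∂advMeasure a 0 k ≤ k * μ ^ 2 := by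
  rw [← integral_finsetSum _ fun j _ => integrable_energy _ hm hb]
  calc ∫ y, ∑ j, energy a (EuclideanSpace.single j μ) y ∂advMeasure a 0 k
      ≤ ∫ _y, (k * μ ^ 2 : ℝ) ∂advMeasure a 0 k :=
        integral_mono (integrable_finsetSum _ fun j _ => integrable_energy _ hm hb)
          (integrable_const _) (sum_energy_single_le hb μ)
    _ = k * μ ^ 2 := by simp

end Mixture

lemma card_filter_val_lt_half (n : ℕ) : #{j : Fin n | (j : ℕ) < n / 2} = n / 2 := by
  rw [Fin.card_filter_val_lt]
  omega

lemma card_filter_half_le_val {n : ℕ} (hn : Even n) :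
    #{j : Fin n | n / 2 ≤ (j : ℕ)} = n / 2 := by
  have h := card_filter_add_card_filter_not (s := univ) fun j : Fin n => (j : ℕ) < n / 2
  simp only [not_lt, card_filter_val_lt_half, card_univ, Fintype.card_fin] at h
  obtain ⟨r, rfl⟩ := hn
  omega

lemma sum_filter_val_lt_half_add_sum_filter_half_le_val {M : Type*} [AddCommMonoid M] {n : ℕ}
    (f : Fin n → M) :
    ∑ j ∈ univ.filter (fun j : Fin n => (j : ℕ) < n / 2), f j +
      ∑ j ∈ univ.filter (fun j : Fin n => n / 2 ≤ (j : ℕ)), f j = ∑ j, f j := by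
  simpa only [not_lt] using
    sum_filter_add_sum_filter_not univ (fun j : Fin n => (j : ℕ) < n / 2) f

theorem klDiv_half_mixtures_le_general (n m : ℕ) (hn : Even n) (hn0 : 0 < n)
    (a : (i : ℕ) → (Fin i → ℝ) → EuclideanSpace ℝ (Fin n))
    (ha_meas : ∀ i, i < m → Measurable (a i))
    (ha_norm : ∀ i, i < m → ∀ y, ‖a i y‖ ≤ 1)
    (μ : ℝ)
    (P₁ P₂ : Measure (Fin m → ℝ))
    (hP₁ : P₁ = ((2 : ℝ≥0∞) / n) •
      ∑ j ∈ Finset.univ.filter (fun j : Fin n => (j : ℕ) < n / 2),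
        advMeasure a (EuclideanSpace.single j μ) m)
    (hP₂ : P₂ = ((2 : ℝ≥0∞) / n) •
      ∑ j ∈ Finset.univ.filter (fun j : Fin n => n / 2 ≤ (j : ℕ)),
        advMeasure a (EuclideanSpace.single j μ) m) :
    klDiv (advMeasure a 0 m) P₁ + klDiv (advMeasure a 0 m) P₂ ≤
      ENNReal.ofReal (μ ^ 2 * (m : ℝ) / n) := by
  have hnR : (0 : ℝ) < n := by exact_mod_cast hn0
  have hhalf : ((n / 2 : ℕ) : ℝ) * (2 / n) = 1 := by
    rw [Nat.cast_div hn.two_dvd two_ne_zero, Nat.cast_ofNat]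
    field_simp
  have h2n : (2 : ℝ≥0∞) / n = ENNReal.ofReal (2 / n) := by
    rw [ENNReal.ofReal_div_of_pos hnR, ENNReal.ofReal_natCast, ENNReal.ofReal_ofNat]
  set E : Fin n → ℝ :=
    fun j => ∫ y, energy a (EuclideanSpace.single j μ) y ∂advMeasure a 0 m
  have hE : ∀ J : Finset (Fin n), 0 ≤ 2 / (n : ℝ) * (∑ j ∈ J, E j) / 2 := fun J => by
    have : 0 ≤ ∑ j ∈ J, E j :=
      sum_nonneg fun j _ => integral_nonneg fun y => energy_nonneg a _ y
    positivity
  rw [hP₁, hP₂, h2n]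
  refine (add_le_add
    (klDiv_smul_sum_advMeasure_le _ (by positivity)
      (by rw [card_filter_val_lt_half, hhalf]) ha_meas ha_norm)
    (klDiv_smul_sum_advMeasure_le _ (by positivity)
      (by rw [card_filter_half_le_val hn, hhalf]) ha_meas ha_norm)).trans ?_
  rw [← ENNReal.ofReal_add (hE _) (hE _)]
  refine ENNReal.ofReal_le_ofReal ?_
  calc 2 / (n : ℝ) * (∑ j ∈ univ.filter (fun j : Fin n => (j : ℕ) < n / 2), E j) / 2 +
        2 / (n : ℝ) * (∑ j ∈ univ.filter (fun j : Fin n => n / 2 ≤ (j : ℕ)), E j) / 2 =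
        (∑ j, E j) / n := by
        rw [← sum_filter_val_lt_half_add_sum_filter_half_le_val]
        field_simp
    _ ≤ m * μ ^ 2 / n := by gcongr; exact integral_sum_energy_single_le ha_meas ha_norm μ
    _ = μ ^ 2 * m / n := by ring

/-- **KL bound for half-supported mixtures in the adaptive Gaussian measurement model.**
With `n` even, `J₁ = {1, …, n/2}`, `J₂ = {n/2+1, …, n}`, `μ > 0`, and
`P r = (2/n) ∑_{j ∈ J r} P_{(j)}` the uniform mixture over locations in `J r`,
`KL(P₀, P₁) + KL(P₀, P₂) ≤ μ² m / n`. -/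
theorem klDiv_half_mixtures_le (n m : ℕ) (hn : Even n) (hn0 : 0 < n)
    (a : (i : ℕ) → (Fin i → ℝ) → EuclideanSpace ℝ (Fin n))
    (ha_meas : ∀ i, i < m → Measurable (a i))
    (ha_norm : ∀ i, i < m → ∀ y, ‖a i y‖ ≤ 1)
    (μ : ℝ) (hμ : 0 < μ)
    (P₁ P₂ : Measure (Fin m → ℝ))
    (hP₁ : P₁ = ((2 : ℝ≥0∞) / n) •
      ∑ j ∈ Finset.univ.filter (fun j : Fin n => (j : ℕ) < n / 2),
        advMeasure a (EuclideanSpace.single j μ) m)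
    (hP₂ : P₂ = ((2 : ℝ≥0∞) / n) •
      ∑ j ∈ Finset.univ.filter (fun j : Fin n => n / 2 ≤ (j : ℕ)),
        advMeasure a (EuclideanSpace.single j μ) m) :
    klDiv (advMeasure a 0 m) P₁ + klDiv (advMeasure a 0 m) P₂ ≤
      ENNReal.ofReal (μ ^ 2 * (m : ℝ) / n) :=
  klDiv_half_mixtures_le_general n m hn hn0 a ha_meas ha_norm μ P₁ P₂ hP₁ hP₂
end
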